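/- arXiv:1805.10042 — 4 statements merged into one kernel-verified Lean document; each statement's English description precedes it below -/
import Mathlib

section
/- Let w_m be the concatenation, for i = 0 to m, of the binary expansion of i followed by a separator symbol $. If a factor (substring) of w_m contains at least two occurrences of $, then it has exactly one occurrence in w_m (i.e., it occurs at a unique position). -/
/-!
Write `w_m` as the blocks `bin(0), …, bin(m)`, each terminated by `$`. Two consecutive `$`'s
of a factor can only be the terminators of two consecutive blocks, so the letters between them
form a whole block `bin(k)`; since `bin` is injective, this pins down `k`, and with it the
position of the factor.
-/

/-- The binary expansion of `i` (most significant bit first, `binExp 0 = [0]`),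
as a list over `ℕ`, using digits `0` and `1`. -/
def binExp (i : ℕ) : List ℕ :=
  if i = 0 then [0] else (Nat.digits 2 i).reverse

/-- The string `w_m = bin(0)$bin(1)$⋯bin(m)$` over the alphabet `{0,1,$}`,
where the separator `$` is encoded by the letter `2`. -/
def wString (m : ℕ) : List ℕ :=
  ((List.range (m + 1)).map (fun i => binExp i ++ [2])).flatten

namespace List

variable {α : Type*} {c : α}

def joinTerminated (c : α) (L : List (List α)) : List α :=
  (L.map (· ++ [c])).flatten

@[simp]
theorem joinTerminated_nil : joinTerminated c [] = [] := rfl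

@[simp]
theorem joinTerminated_cons (b : List α) (L : List (List α)) :
    joinTerminated c (b :: L) = b ++ c :: joinTerminated c L := by
  simp [joinTerminated]

variable [DecidableEq α]

theorem eq_and_eq_of_append_cons_eq_append_cons {a b x y : List α} (ha : c ∉ a) (hb : c ∉ b)
    (h : a ++ c :: x = b ++ c :: y) : a = b ∧ x = y := by
  have hlen : a.length = b.length := by
    simpa [idxOf_append_of_notMem ha, idxOf_append_of_notMem hb] using congrArg (idxOf c) h
  obtain ⟨hab, hxy⟩ := append_inj h hlen
  exact ⟨hab, (cons_inj_right c).mp hxy⟩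

theorem exists_eq_append_cons_append_cons_of_two_le_count {t : List α} (h : 2 ≤ t.count c) :
    ∃ u v r, t = u ++ c :: (v ++ c :: r) ∧ c ∉ v := by
  obtain ⟨u, s, rfl, hu⟩ := eq_append_cons_of_mem (count_pos_iff.mp (by omega) : c ∈ t)
  have hs : c ∈ s := by
    rw [count_append, count_cons_self, count_eq_zero_of_not_mem hu] at h
    exact count_pos_iff.mp (by omega)
  obtain ⟨v, r, rfl, hv⟩ := eq_append_cons_of_mem hs
  exact ⟨u, v, r, rfl, hv⟩

variable {L : List (List α)}

theorem exists_eq_cons_of_joinTerminated_eq (hL : ∀ b ∈ L, c ∉ b) {v r : List α} (hv : c ∉ v)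
    (h : joinTerminated c L = v ++ c :: r) : ∃ L', L = v :: L' := by
  cases L with
  | nil => simp at h
  | cons b L' =>
    rw [joinTerminated_cons] at h
    obtain ⟨rfl, -⟩ := eq_and_eq_of_append_cons_eq_append_cons (hL b mem_cons_self) hv h
    exact ⟨L', rfl⟩

theorem exists_eq_append_cons_of_joinTerminated_eq (hL : ∀ b ∈ L, c ∉ b) {a v r : List α}
    (hv : c ∉ v) (h : joinTerminated c L = a ++ c :: (v ++ c :: r)) :
    ∃ L₁ L₂, L = L₁ ++ v :: L₂ ∧ joinTerminated c L₁ = a ++ [c] := by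
  induction L generalizing a with
  | nil => simp at h
  | cons b L ih =>
    have hb : c ∉ b := hL b mem_cons_self
    have hL' : ∀ b ∈ L, c ∉ b := fun b' hb' => hL b' (mem_cons_of_mem b hb')
    rw [joinTerminated_cons] at h
    by_cases ha : c ∈ a
    · obtain ⟨a₀, a', rfl, ha₀⟩ := eq_append_cons_of_mem ha
      obtain ⟨rfl, hrest⟩ := eq_and_eq_of_append_cons_eq_append_cons hb ha₀ (by simpa using h)
      obtain ⟨L₁, L₂, rfl, hL₁⟩ := ih hL' hrest
      exact ⟨b :: L₁, L₂, rfl, by simp [hL₁]⟩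
    · obtain ⟨rfl, hrest⟩ := eq_and_eq_of_append_cons_eq_append_cons hb ha h
      obtain ⟨L₂, rfl⟩ := exists_eq_cons_of_joinTerminated_eq hL' hv hrest
      exact ⟨[b], L₂, rfl, by simp⟩

theorem exists_eq_append_cons_of_prefix_drop_joinTerminated (hL : ∀ b ∈ L, c ∉ b)
    {u v r : List α} (hv : c ∉ v) {i : ℕ}
    (h : u ++ c :: (v ++ c :: r) <+: (joinTerminated c L).drop i) :
    ∃ L₁ L₂, L = L₁ ++ v :: L₂ ∧ i + u.length + 1 = (joinTerminated c L₁).length := by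
  obtain ⟨y, hy⟩ := h
  have hi : i ≤ (joinTerminated c L).length := by
    by_contra! hi
    simp [drop_of_length_le hi.le] at hy
  have hsplit :
      joinTerminated c L = (joinTerminated c L).take i ++ u ++ c :: (v ++ c :: (r ++ y)) := by
    conv_lhs => rw [← take_append_drop i (joinTerminated c L), ← hy]
    simp
  obtain ⟨L₁, L₂, hL₁₂, hL₁⟩ := exists_eq_append_cons_of_joinTerminated_eq hL hv hsplit
  refine ⟨L₁, L₂, hL₁₂, ?_⟩
  rw [hL₁]
  simp only [length_append, length_take, Nat.min_eq_left hi, length_singleton]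

theorem existsUnique_prefix_drop_joinTerminated (hL : ∀ b ∈ L, c ∉ b) (hnd : L.Nodup)
    {t : List α} (ht : t <:+: joinTerminated c L) (hc : 2 ≤ t.count c) :
    ∃! i, t <+: (joinTerminated c L).drop i := by
  obtain ⟨u, v, r, rfl, hv⟩ := exists_eq_append_cons_append_cons_of_two_le_count hc
  obtain ⟨s, y, hw⟩ := ht
  have hocc : u ++ c :: (v ++ c :: r) <+: (joinTerminated c L).drop s.length :=
    ⟨y, by simp [← hw]⟩
  refine ⟨s.length, hocc, fun i hi => ?_⟩
  obtain ⟨L₁, L₂, rfl, hL₁⟩ := exists_eq_append_cons_of_prefix_drop_joinTerminated hL hv hi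
  obtain ⟨L₁', L₂', hL', hL₁'⟩ := exists_eq_append_cons_of_prefix_drop_joinTerminated hL hv hocc
  have hvL₁ : v ∉ L₁ := fun h => (nodup_cons.mp (nodup_middle.mp hnd)).1 (mem_append_left L₂ h)
  have hvL₁' : v ∉ L₁' := fun h =>
    (nodup_cons.mp (nodup_middle.mp (hL' ▸ hnd))).1 (mem_append_left L₂' h)
  obtain ⟨rfl, -⟩ := eq_and_eq_of_append_cons_eq_append_cons hvL₁ hvL₁' hL'
  omega

end List

theorem two_notMem_binExp (i : ℕ) : 2 ∉ binExp i := by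
  unfold binExp
  split_ifs
  · simp
  · intro h
    exact (Nat.digits_lt_base one_lt_two (List.mem_reverse.mp h)).false

theorem binExp_injective : Function.Injective binExp := by
  have hinv : Function.LeftInverse (fun l => Nat.ofDigits 2 l.reverse) binExp := by
    intro i
    unfold binExp
    split_ifs with hi
    · simp [hi]
    · simp [Nat.ofDigits_digits]
  exact hinv.injective

theorem wString_eq_joinTerminated (m : ℕ) :
    wString m = ((List.range (m + 1)).map binExp).joinTerminated 2 := by
  simp [wString, List.joinTerminated, Function.comp_def]

/-- A factor of `w_m` containing at least two occurrences of the separator `$`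
occurs at a unique position in `w_m`. -/
theorem factor_two_seps_unique_occurrence (m : ℕ) (t : List ℕ)
    (ht : t <:+: wString m) (hc : 2 ≤ t.count 2) :
    ∃! i : ℕ, t <+: (wString m).drop i := by
  rw [wString_eq_joinTerminated] at ht ⊢
  refine List.existsUnique_prefix_drop_joinTerminated ?_ ?_ ht hc
  · simp only [List.mem_map]
    rintro _ ⟨i, -, rfl⟩
    exact two_notMem_binExp i
  · exact List.nodup_range.map binExp_injective
end

section
/- Let w_m have length n. Then the total number of occurrences of k-anti-powers in w_m (summed over all anti-periods p with 3 + 2⌈log₂ m⌉ < p ≤ n/k) is at least n²/(2k) − 7n/2 − 2n⌈log₂ m⌉; in particular it is Ω(n²/k) when k is fixed and m → ∞. -/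
def IsAntiPower {α : Type*} (S : List α) (k p : ℕ) : Prop :=
  S.length = k * p ∧
    ∃ u : Fin k → List α, (∀ i, (u i).length = p) ∧ Function.Injective u ∧
      S = (List.ofFn u).flatten

namespace List

variable {α : Type*}

theorem append_cons_eq_append_cons_iff {s : α} {a a' r r' : List α} (ha : s ∉ a)
    (ha' : s ∉ a') :
    a ++ s :: r = a' ++ s :: r' ↔ a = a' ∧ r = r' := by
  induction a generalizing a' with
  | nil => cases a' <;> simp_all [eq_comm]
  | cons c a ih => cases a' <;> simp_all [eq_comm, and_assoc]

theorem eq_of_take_append_cons_append_cons_eq {s : α} {a b a' b' r r' : List α} {p : ℕ}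
    (ha : s ∉ a) (hb : s ∉ b) (ha' : s ∉ a') (hb' : s ∉ b')
    (hp : a.length + b.length + 2 ≤ p) (hp' : a'.length + b'.length + 2 ≤ p)
    (h : (a ++ s :: (b ++ s :: r)).take p = (a' ++ s :: (b' ++ s :: r')).take p) :
    a = a' ∧ b = b' := by
  have take_eq : ∀ a b r : List α, ∀ q,
      (a ++ s :: (b ++ s :: r)).take (a.length + b.length + 2 + q) =
        a ++ s :: (b ++ s :: r.take q) := by
    intro a b r q
    rw [show a.length + b.length + 2 + q = a.length + (b.length + (q + 1) + 1) by omega,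
      take_length_add_append, take_succ_cons, take_length_add_append, take_succ_cons]
  obtain ⟨q, rfl⟩ := Nat.exists_eq_add_of_le hp
  obtain ⟨q', hq'⟩ := Nat.exists_eq_add_of_le hp'
  rw [take_eq, hq', take_eq, append_cons_eq_append_cons_iff ha ha',
    append_cons_eq_append_cons_iff hb hb'] at h
  exact ⟨h.1, h.2.1⟩

theorem take_mul_eq_flatten_ofFn (l : List α) (p k : ℕ) :
    l.take (k * p) = (ofFn fun j : Fin k => (l.drop (j * p)).take p).flatten := by
  induction k generalizing l with
  | zero => simp
  | succ k ih =>
    rw [add_mul, one_mul, add_comm, take_add, ih, ofFn_succ, flatten_cons]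
    simp [drop_drop, add_mul, add_comm]

end List

section SeparatedBlocks

variable {α : Type*} {s : α} {W : List (List α)} {ℓ : ℕ}

theorem exists_drop_flatMap_append_singleton_eq (hs : ∀ b ∈ W, s ∉ b)
    (hℓ : ∀ b ∈ W, b.length ≤ ℓ) {x : ℕ} (hx : x < (W.flatMap (· ++ [s])).length) :
    ∃ a i, s ∉ a ∧ a.length ≤ ℓ ∧
      (W.flatMap (· ++ [s])).drop x = a ++ s :: (W.drop i).flatMap (· ++ [s]) := by
  induction W generalizing x with
  | nil => simp at hx
  | cons b W ih =>
    simp only [List.mem_cons, forall_eq_or_imp] at hs hℓ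
    rw [List.flatMap_cons] at hx ⊢
    by_cases hxb : x ≤ b.length
    · refine ⟨b.drop x, 1, fun h => hs.1 (List.mem_of_mem_drop h), ?_, ?_⟩
      · simp only [List.length_drop]; omega
      · simp [List.drop_append_of_le_length hxb]
    · obtain ⟨q, rfl⟩ := Nat.exists_eq_add_of_lt (not_le.mp hxb)
      simp only [List.length_append, List.length_singleton] at hx
      obtain ⟨a, i, ha, hal, hdrop⟩ := ih hs.2 hℓ.2 (x := q) (by omega)
      refine ⟨a, i + 1, ha, hal, ?_⟩
      rw [show b.length + q + 1 = (b ++ [s]).length + q by simp; omega,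
        List.drop_length_add_append, hdrop, List.drop_succ_cons]

theorem exists_drop_flatMap_append_singleton_eq_getElem (hs : ∀ b ∈ W, s ∉ b)
    (hℓ : ∀ b ∈ W, b.length ≤ ℓ) {x : ℕ} (hx : x + ℓ + 2 ≤ (W.flatMap (· ++ [s])).length) :
    ∃ a i, ∃ hi : i < W.length, s ∉ a ∧ a.length ≤ ℓ ∧ (W.flatMap (· ++ [s])).drop x =
      a ++ s :: (W[i] ++ s :: (W.drop (i + 1)).flatMap (· ++ [s])) := by
  obtain ⟨a, i, ha, hal, hdrop⟩ :=
    exists_drop_flatMap_append_singleton_eq hs hℓ (x := x) (by omega)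
  have hi : i < W.length := by
    by_contra hi
    have := congrArg List.length hdrop
    simp only [List.length_drop, List.drop_of_length_le (not_lt.mp hi), List.flatMap_nil,
      List.length_append, List.length_singleton] at this
    omega
  rw [List.drop_eq_getElem_cons hi, List.flatMap_cons, List.append_assoc,
    List.singleton_append] at hdrop
  exact ⟨a, i, hi, ha, hal, hdrop⟩

theorem injOn_take_drop_flatMap_append_singleton (hW : W.Nodup) (hs : ∀ b ∈ W, s ∉ b)
    (hℓ : ∀ b ∈ W, b.length ≤ ℓ) {p : ℕ} (hp : 2 * ℓ + 2 ≤ p) :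
    Set.InjOn (fun x => ((W.flatMap (· ++ [s])).drop x).take p)
      {x | x + p ≤ (W.flatMap (· ++ [s])).length} := by
  intro x hx y hy hxy
  simp only [Set.mem_ofPred_eq] at hx hy
  obtain ⟨a, i, hi, ha, hal, hx'⟩ :=
    exists_drop_flatMap_append_singleton_eq_getElem hs hℓ (x := x) (by omega)
  obtain ⟨a', j, hj, ha', hal', hy'⟩ :=
    exists_drop_flatMap_append_singleton_eq_getElem hs hℓ (x := y) (by omega)
  have hWi := hℓ _ (W.getElem_mem hi)
  have hWj := hℓ _ (W.getElem_mem hj)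
  obtain ⟨rfl, hij⟩ := List.eq_of_take_append_cons_append_cons_eq (p := p) ha
    (hs _ (W.getElem_mem hi)) ha' (hs _ (W.getElem_mem hj)) (by omega) (by omega)
    (by simpa only [hx', hy'] using hxy)
  obtain rfl := hW.getElem_inj_iff.mp hij
  have := congrArg List.length (hx'.trans hy'.symm)
  simp only [List.length_drop] at this
  omega

end SeparatedBlocks

section AntiPowers

variable {α : Type*} {L : List α} {k p : ℕ}

theorem isAntiPower_take_drop_of_injOn (hp : 0 < p)
    (hinj : Set.InjOn (fun x => (L.drop x).take p) {x | x + p ≤ L.length}) {i : ℕ}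
    (hi : i + k * p ≤ L.length) : IsAntiPower ((L.drop i).take (k * p)) k p := by
  have hblock (j : Fin k) : i + j * p + p ≤ L.length := by
    have := Nat.mul_le_mul_right p (Nat.succ_le_of_lt j.2)
    rw [Nat.succ_mul] at this
    omega
  refine ⟨by simp; omega, fun j => (L.drop (i + j * p)).take p, fun j => ?_, fun j j' h => ?_, ?_⟩
  · have := hblock j
    simp only [List.length_take, List.length_drop]
    omega
  · have := hinj (hblock j) (hblock j') h
    exact Fin.ext (Nat.eq_of_mul_eq_mul_right hp (by omega))
  · simp [List.take_mul_eq_flatten_ofFn, List.drop_drop]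

open scoped Classical in
theorem card_filter_isAntiPower_of_injOn (hp : 0 < p)
    (hinj : Set.InjOn (fun x => (L.drop x).take p) {x | x + p ≤ L.length}) :
    ((Finset.range (L.length + 1)).filter
        (fun i => i + k * p ≤ L.length ∧ IsAntiPower ((L.drop i).take (k * p)) k p)).card =
      L.length + 1 - k * p := by
  rw [← Finset.card_range (L.length + 1 - k * p)]
  congr 1
  ext i
  simp only [Finset.mem_filter, Finset.mem_range]
  constructor
  · rintro ⟨-, hi, -⟩
    omega
  · intro hi
    exact ⟨by omega, by omega, isAntiPower_take_drop_of_injOn hp hinj (by omega)⟩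

end AntiPowers

theorem ofDigits_reverse_binExp (i : ℕ) : Nat.ofDigits 2 (binExp i).reverse = i := by
  unfold binExp
  split_ifs with h <;> simp [h, Nat.ofDigits_digits]

theorem lt_two_of_mem_binExp {i d : ℕ} (h : d ∈ binExp i) : d < 2 := by
  unfold binExp at h
  split_ifs at h
  · simp_all
  · exact Nat.digits_lt_base one_lt_two (List.mem_reverse.mp h)

theorem length_binExp_le_clog {i m : ℕ} (h : i ≤ m) : (binExp i).length ≤ Nat.clog 2 m + 1 := by
  unfold binExp
  split_ifs with hi
  · simp
  · rw [List.length_reverse, Nat.length_digits 2 i one_lt_two hi]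
    exact Nat.succ_le_succ ((Nat.log_mono_right h).trans (Nat.log_le_clog 2 m))

theorem wString_eq_flatMap (m : ℕ) :
    wString m = ((List.range (m + 1)).map binExp).flatMap (· ++ [2]) := by
  simp only [wString, List.flatMap_def, List.map_map]
  rfl

theorem wString_injOn_take_drop {m p : ℕ} (hp : 3 + 2 * Nat.clog 2 m < p) :
    Set.InjOn (fun x => ((wString m).drop x).take p) {x | x + p ≤ (wString m).length} := by
  rw [wString_eq_flatMap]
  refine injOn_take_drop_flatMap_append_singleton (ℓ := Nat.clog 2 m + 1)
    (List.nodup_range.map binExp_injective) ?_ ?_ (by omega)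
  · simp only [List.mem_map, List.mem_range]
    rintro _ ⟨i, -, rfl⟩ h
    exact lt_irrefl 2 (lt_two_of_mem_binExp h)
  · simp only [List.mem_map, List.mem_range]
    rintro _ ⟨i, hi, rfl⟩
    exact length_binExp_le_clog (Nat.lt_succ_iff.mp hi)

theorem sum_Ioc_sub_mul (n k : ℕ) {a P : ℕ} (h : a ≤ P) :
    ∑ p ∈ Finset.Ioc a P, ((n : ℝ) + 1 - k * p) =
      (P - a) * (n + 1) - k * (P * (P + 1) - a * (a + 1)) / 2 := by
  induction P, h using Nat.le_induction with
  | base => simp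
  | succ P h ih =>
    rw [Finset.sum_Ioc_succ_top h, ih]
    push_cast
    ring

theorem le_sum_Ioc_sub_mul (n a : ℕ) {k : ℕ} (hk : 0 < k) :
    (n : ℝ) ^ 2 / (2 * k) - (2 * a + 1) * n / 2 ≤
      ∑ p ∈ Finset.Ioc a (n / k), ((n + 1 - k * p : ℕ) : ℝ) := by
  set P := n / k
  set r := n % k
  have hn : (n : ℝ) = k * P + r := by exact_mod_cast (Nat.div_add_mod n k).symm
  have hr : (r : ℝ) < k := by exact_mod_cast Nat.mod_lt n hk
  have hkR : (0 : ℝ) < k := by exact_mod_cast hk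
  rw [sub_le_iff_le_add, div_le_iff₀ (by positivity)]
  rcases le_or_gt a P with haP | hPa
  · have hcast : ∀ p ∈ Finset.Ioc a P, ((n + 1 - k * p : ℕ) : ℝ) = n + 1 - k * p := by
      intro p hp
      have : k * p ≤ n :=
        (Nat.mul_le_mul_left k (Finset.mem_Ioc.mp hp).2).trans (Nat.mul_div_le n k)
      push_cast [Nat.cast_sub (this.trans n.le_succ)]
      ring
    rw [Finset.sum_congr rfl hcast, sum_Ioc_sub_mul n k haP, hn]
    have haP' : (a : ℝ) ≤ P := by exact_mod_cast haP
    -- `2k·(sum) + (2a+1)·k·n - n² = 2k(P-a) + k²a(a+1) + r(k-r)`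
    nlinarith [mul_nonneg hkR.le (sub_nonneg.mpr haP'),
      mul_nonneg (Nat.cast_nonneg r) (sub_nonneg.mpr hr.le),
      mul_nonneg (mul_nonneg hkR.le hkR.le)
        (mul_nonneg (Nat.cast_nonneg a) (by positivity : (0 : ℝ) ≤ a + 1))]
  · rw [Finset.Ioc_eq_empty (not_lt.mpr hPa.le), Finset.sum_empty, zero_add]
    have hnk : (n : ℝ) ≤ k * a := by
      rw [hn]
      have : (P : ℝ) + 1 ≤ a := by exact_mod_cast hPa
      nlinarith
    nlinarith [Nat.cast_nonneg (α := ℝ) n, Nat.cast_nonneg (α := ℝ) a]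

open scoped Classical in
/-- The total number of occurrences of `k`-anti-powers in `w_m`, summed over
anti-periods `p` with `3 + 2⌈log₂ m⌉ < p ≤ n/k` (where `n = |w_m|`), is at least
`n²/(2k) − 7n/2 − 2n⌈log₂ m⌉`, which is `Ω(n²/k)`. -/
theorem wString_antiPower_lower_bound (m k : ℕ) (hk : 1 ≤ k) :
    (wString m).length ^ 2 / (2 * (k : ℝ)) - 7 * (wString m).length / 2
        - 2 * (wString m).length * Nat.clog 2 m ≤
      ∑ p ∈ Finset.Ioc (3 + 2 * Nat.clog 2 m) ((wString m).length / k),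
        (((Finset.range ((wString m).length + 1)).filter
            (fun i => i + k * p ≤ (wString m).length ∧
              IsAntiPower (((wString m).drop i).take (k * p)) k p)).card : ℝ) := by
  set n := (wString m).length
  set a := 3 + 2 * Nat.clog 2 m
  calc (n : ℝ) ^ 2 / (2 * k) - 7 * n / 2 - 2 * n * Nat.clog 2 m
      = (n : ℝ) ^ 2 / (2 * k) - (2 * a + 1) * n / 2 := by push_cast [a]; ring
    _ ≤ ∑ p ∈ Finset.Ioc a (n / k), ((n + 1 - k * p : ℕ) : ℝ) := le_sum_Ioc_sub_mul n a hk
    _ = _ := Finset.sum_congr rfl fun p hp => by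
      have hap := (Finset.mem_Ioc.mp hp).1
      rw [card_filter_isAntiPower_of_injOn (by omega) (wString_injOn_take_drop hap)]
end

section
/- For a string S and indices x ≤ y, if S[x..y] has pairwise-distinct letters and S[y+1] occurs in S[x..y] at position j (i.e., S[j] = S[y+1] with x ≤ j ≤ y), then j is unique, and S[j+1..y+1] has pairwise-distinct letters; moreover, for any x' ≤ j, S[x'..y+1] does not have pairwise-distinct letters. -/
/-!
Argue with positions rather than letters: a window is duplicate-free iff equal letters at two of
its positions force the positions to coincide. The positions `j` and `y + 1` carry the same
letter, and every window `[x', y + 1]` with `x' ≤ j` contains both. A repeated pair in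
`[j + 1, y + 1]` either lies in `[x, y]`, or pairs `y + 1` with some `p ∈ (j, y]`, and then
`S[p] = S[j]` contradicts distinctness on `[x, y]`.
-/

namespace List

variable {α : Type*}

theorem nodup_take_drop_iff {S : List α} {a n : ℕ} :
    ((S.drop a).take n).Nodup ↔
      ∀ i k (hi : i < S.length) (hk : k < S.length),
        a ≤ i → i < a + n → a ≤ k → k < a + n → S[i] = S[k] → i = k := by
  rw [nodup_iff_injective_getElem]
  constructor
  · intro hinj i k hi hk hai hin hak hkn heq
    have hlen : ((S.drop a).take n).length = min n (S.length - a) := by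
      rw [length_take, length_drop]
    have hik := @hinj ⟨i - a, by omega⟩ ⟨k - a, by omega⟩
      (by simpa [Nat.add_sub_cancel' hai, Nat.add_sub_cancel' hak] using heq)
    simp only [Fin.mk.injEq] at hik
    omega
  · rintro H ⟨i, hi⟩ ⟨k, hk⟩ heq
    simp only [length_take, length_drop, lt_min_iff] at hi hk
    simp only [getElem_take, getElem_drop] at heq
    have hik : a + i = a + k :=
      H (a + i) (a + k) (by omega) (by omega) (by omega) (by omega) (by omega) (by omega) heq
    exact Fin.mk.inj_iff.mpr (by omega)

end List

/-- Two-pointer invariant: if `S[x..y]` has pairwise-distinct letters and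
`S[y+1]` occurs in `S[x..y]` at position `j`, then `j` is unique,
`S[j+1..y+1]` has pairwise-distinct letters, and for every `x' ≤ j`
the window `S[x'..y+1]` does not have pairwise-distinct letters. -/
theorem two_pointer_invariant {α : Type*} (S : List α) (x y j : ℕ)
    (hy : y + 1 < S.length) (hxj : x ≤ j) (hjy : j ≤ y)
    (hrep : S.get ⟨j, by omega⟩ = S.get ⟨y + 1, hy⟩)
    (hnodup : ((S.drop x).take (y - x + 1)).Nodup) :
    (∀ j' : ℕ, (h1 : x ≤ j') → (h2 : j' ≤ y) →
        (hj' : S.get ⟨j', by omega⟩ = S.get ⟨y + 1, hy⟩) → j' = j) ∧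
    ((S.drop (j + 1)).take (y + 1 - (j + 1) + 1)).Nodup ∧
    (∀ x' : ℕ, x' ≤ j → ¬ ((S.drop x').take (y + 1 - x' + 1)).Nodup) := by
  simp only [List.get_eq_getElem] at hrep ⊢
  rw [List.nodup_take_drop_iff] at hnodup
  refine ⟨fun j' hxj' hj'y hj' => ?_, ?_, fun x' hx'j hnodup' => ?_⟩
  · exact hnodup j' j _ _ (by omega) (by omega) hxj (by omega) (hj'.trans hrep.symm)
  · have last_fresh : ∀ p (hp : p < S.length), j < p → p ≤ y → S[p] ≠ S[y + 1] :=
      fun p _ hjp hpy h => by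
        have hpj : p = j :=
          hnodup p j _ _ (by omega) (by omega) hxj (by omega) (h.trans hrep.symm)
        omega
    rw [List.nodup_take_drop_iff]
    intro i k hi hk hji hiy hjk hky heq
    by_cases hi_last : i = y + 1 <;> by_cases hk_last : k = y + 1
    · omega
    · subst hi_last; exact absurd heq.symm (last_fresh k hk (by omega) (by omega))
    · subst hk_last; exact absurd heq (last_fresh i hi (by omega) (by omega))
    · exact hnodup i k hi hk (by omega) (by omega) (by omega) (by omega) heq
  · have hj_eq : j = y + 1 := List.nodup_take_drop_iff.mp hnodup' j (y + 1) _ hy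
      (by omega) (by omega) (by omega) (by omega) hrep
    omega
end

section
/- The longest substring with pairwise-distinct letters found by the two-pointer scan is indeed maximum: for any string S, the maximum over all y of (y − x(y) + 1), where x(y) is the least index such that S[x(y)..y] has pairwise-distinct letters, equals the length of the longest substring of S with pairwise-distinct letters. -/
/-!
Every window `S[xf y..y]` is a substring with distinct letters, so the maximum is attained.
Conversely a substring `t` with distinct letters ending at position `y` is the window
`S[x..y]` for some `x`; minimality of `xf y` gives `xf y ≤ x`, so `t` is no longer than the
window found by the scan at `y`.
-/

namespace List

variable {α : Type*}

theorem take_drop_infix (S : List α) (x n : ℕ) : (S.drop x).take n <:+: S :=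
  (take_prefix _ _).isInfix.trans (drop_suffix _ _).isInfix

theorem IsInfix.exists_take_drop_eq {t S : List α} (h : t <:+: S) :
    ∃ x, x + t.length ≤ S.length ∧ (S.drop x).take t.length = t := by
  obtain ⟨s, u, rfl⟩ := h
  refine ⟨s.length, by simp, ?_⟩
  rw [append_assoc, drop_left, take_left]

theorem length_take_drop_sub_add_one {S : List α} {x y : ℕ} (hxy : x ≤ y) (hy : y < S.length) :
    ((S.drop x).take (y - x + 1)).length = y + 1 - x := by
  simp only [length_take, length_drop]
  omega

end List

/-- Correctness of the two-pointer scan: if `xf y` is, for each right endpoint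
`y < |S|`, the least left endpoint such that `S[xf y..y]` has pairwise-distinct
letters, then the maximum over `y` of the window length `y − xf y + 1` is the
length of the longest substring of `S` with pairwise-distinct letters. -/
theorem two_pointer_maximum {α : Type*} (S : List α) (xf : ℕ → ℕ)
    (hxf : ∀ y, y < S.length →
      xf y ≤ y ∧ ((S.drop (xf y)).take (y - xf y + 1)).Nodup ∧
        ∀ x', x' < xf y → ¬ ((S.drop x').take (y - x' + 1)).Nodup) :
    IsGreatest {L : ℕ | ∃ t : List α, t <:+: S ∧ t.Nodup ∧ t.length = L}
      ((Finset.range S.length).sup fun y => y + 1 - xf y) := by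
  constructor
  · rcases (Finset.range S.length).eq_empty_or_nonempty with hS | hS
    · rw [hS, Finset.sup_empty]
      exact ⟨[], List.nil_infix, List.nodup_nil, rfl⟩
    obtain ⟨y, hy, hsup⟩ := Finset.exists_mem_eq_sup _ hS fun y => y + 1 - xf y
    rw [Finset.mem_range] at hy
    obtain ⟨hxy, hnodup, -⟩ := hxf y hy
    exact hsup ▸ ⟨_, List.take_drop_infix S _ _, hnodup,
      List.length_take_drop_sub_add_one hxy hy⟩
  · rintro _ ⟨t, ht, hnodup, rfl⟩
    rcases Nat.eq_zero_or_pos t.length with hlen | hlen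
    · exact hlen ▸ Nat.zero_le _
    obtain ⟨x, hxS, htake⟩ := ht.exists_take_drop_eq
    set y := x + t.length - 1
    have hy : y < S.length := by omega
    have hwindow : (S.drop x).take (y - x + 1) = t := by
      rwa [show y - x + 1 = t.length by omega]
    have hxfx : xf y ≤ x := not_lt.mp fun hlt => (hxf y hy).2.2 x hlt (hwindow ▸ hnodup)
    calc t.length ≤ y + 1 - xf y := by omega
      _ ≤ _ := Finset.le_sup (f := fun y => y + 1 - xf y) (Finset.mem_range.mpr hy)
end
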